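/- Let D be a domain in ℂ, let μ : D → ℂ be measurable with |μ(z)| < 1 almost everywhere, let z₀ ∈ ℂ lie in the closure of D, and let 0 < ε < ε₀ < sup_{z∈D} |z − z₀|. Extend K^T_μ(·, z₀) by zero outside D and, for r > 0, set ‖K^T_μ‖₁(z₀, r) = r·∫_0^{2π} K^T_μ(z₀ + r·e^{iθ}, z₀) dθ. Assume ‖K^T_μ‖₁(z₀, r) ≠ ∞ for almost every r ∈ (ε, ε₀), and set I = ∫_ε^{ε₀} dr / ‖K^T_μ‖₁(z₀, r). Then for every measurable function η : (ε, ε₀) → [0, ∞] with ∫_ε^{ε₀} η(r) dr = 1, one has ∫_{A ∩ D} K^T_μ(z, z₀)·η(|z − z₀|)² dm(z) ≥ I⁻¹, where A = {z ∈ ℂ : ε < |z − z₀| < ε₀} and I⁻¹ is understood as 0 when I = ∞. -/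

import Mathlib

open MeasureTheory ENNReal NNReal

/-- The tangent dilatation `K^T_μ(z, z₀) = |1 − (conj(z−z₀)/(z−z₀))·μ(z)|² / (1 − |μ(z)|²)`
of a Beltrami coefficient `μf` on `D`, extended by zero outside `D`, with the conventions
`a/0 = ∞` for `a > 0` and `0·∞ = 0` (realized via extended nonnegative reals). -/
noncomputable def tangentDilatation (D : Set ℂ) (μf : ℂ → ℂ) (z₀ z : ℂ) : ℝ≥0∞ :=
  Set.indicator D
    (fun w =>
      ENNReal.ofReal (‖1 - ((starRingEnd ℂ) (w - z₀) / (w - z₀)) * μf w‖ ^ 2) /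
        ENNReal.ofReal (1 - ‖μf w‖ ^ 2)) z

/-- `‖K^T_μ‖₁(z₀, r) = r·∫_0^{2π} K^T_μ(z₀ + r·e^{iθ}, z₀) dθ`, the `L¹`-norm of the
tangent dilatation (extended by zero outside `D`) over the circle of radius `r` about `z₀`. -/
noncomputable def circleNormKT (D : Set ℂ) (μf : ℂ → ℂ) (z₀ : ℂ) (r : ℝ) : ℝ≥0∞ :=
  ENNReal.ofReal r *
    ∫⁻ θ in Set.Ioo (0 : ℝ) (2 * Real.pi),
      tangentDilatation D μf z₀ (z₀ + (r : ℂ) * Complex.exp ((θ : ℂ) * Complex.I))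

/-!
In polar coordinates about `z₀` the ring integral becomes
`∫_ε^{ε₀} η(r)² ‖K^T_μ‖₁(z₀, r) dr`. Writing `η = (η √K) · (1 / √K)` with `K = ‖K^T_μ‖₁(z₀, ·)`,
the Cauchy–Schwarz inequality gives `1 = (∫ η)² ≤ (∫ η² K) · I`. If `I = ∞` there is nothing to
prove; otherwise `K > 0` almost everywhere, which is what the factorisation of `η` needs.
-/

open Set Real

theorem measurable_tangentDilatation {D : Set ℂ} (hD : MeasurableSet D) {μf : ℂ → ℂ}
    (hμf : Measurable μf) (z₀ : ℂ) : Measurable (tangentDilatation D μf z₀) := by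
  refine Measurable.indicator ?_ hD
  fun_prop

theorem support_tangentDilatation_subset (D : Set ℂ) (μf : ℂ → ℂ) (z₀ : ℂ) :
    Function.support (tangentDilatation D μf z₀) ⊆ D :=
  support_indicator_subset

theorem measurable_lintegral_circleMap {f : ℂ → ℝ≥0∞} (hf : Measurable f) (c : ℂ) (s : Set ℝ) :
    Measurable fun r => ∫⁻ θ in s, f (circleMap c r θ) := by
  refine Measurable.lintegral_prod_right' (f := fun p : ℝ × ℝ => f (circleMap c p.1 p.2)) ?_
  exact hf.comp (by unfold circleMap; fun_prop)

theorem Function.Periodic.setLIntegral_Ioo_eq {f : ℝ → ℝ≥0∞} {T : ℝ} (hf : f.Periodic T)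
    (hT : 0 < T) (s t : ℝ) :
    ∫⁻ x in Ioo s (s + T), f x = ∫⁻ x in Ioo t (t + T), f x := by
  have := Fact.mk hT
  -- both sides are the integral over `AddCircle T` of the function `f` descends to
  rw [setLIntegral_congr Ioo_ae_eq_Ioc, setLIntegral_congr Ioo_ae_eq_Ioc]
  calc ∫⁻ x in Ioc s (s + T), f x = ∫⁻ x in Ioc s (s + T), hf.lift (x : AddCircle T) := rfl
    _ = ∫⁻ x in Ioc t (t + T), hf.lift (x : AddCircle T) := by
      rw [AddCircle.lintegral_preimage, AddCircle.lintegral_preimage]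
    _ = _ := rfl

theorem Complex.polarCoord_symm_eq_circleMap (r θ : ℝ) :
    Complex.polarCoord.symm (r, θ) = circleMap 0 r θ := by
  simp [circleMap_zero, Complex.exp_mul_I, ← Complex.ofReal_cos, ← Complex.ofReal_sin]

theorem lintegral_eq_lintegral_Ioi_circleMap {f : ℂ → ℝ≥0∞} (hf : Measurable f) (c : ℂ) :
    ∫⁻ z, f z = ∫⁻ r in Ioi 0, ENNReal.ofReal r * ∫⁻ θ in Ioo 0 (2 * π), f (circleMap c r θ) := by
  have hmeas : Measurable fun p : ℝ × ℝ => ENNReal.ofReal p.1 * f (circleMap c p.1 p.2) :=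
    (measurable_fst.ennreal_ofReal).mul (hf.comp (by unfold circleMap; fun_prop))
  calc ∫⁻ z, f z = ∫⁻ w, f (c + w) := (lintegral_add_left_eq_self f c).symm
    _ = ∫⁻ p in Ioi 0 ×ˢ Ioo (-π) π, ENNReal.ofReal p.1 * f (circleMap c p.1 p.2) := by
      rw [← Complex.lintegral_comp_polarCoord_symm, polarCoord_target]
      congr! 3 with p
      rw [Complex.polarCoord_symm_eq_circleMap, ← circleMap_sub_center, add_sub_cancel]
    _ = ∫⁻ r in Ioi 0, ∫⁻ θ in Ioo (-π) π, ENNReal.ofReal r * f (circleMap c r θ) := by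
      rw [Measure.volume_eq_prod, ← Measure.prod_restrict, lintegral_prod _ hmeas.aemeasurable]
    _ = _ := by
      refine lintegral_congr fun r => ?_
      rw [lintegral_const_mul' _ _ ofReal_ne_top]
      congr 1
      have := (periodic_circleMap c r).comp f |>.setLIntegral_Ioo_eq two_pi_pos (-π) 0
      rwa [zero_add, show -π + 2 * π = π by ring] at this

theorem dist_circleMap_center (c : ℂ) {r : ℝ} (hr : 0 ≤ r) (θ : ℝ) :
    dist (circleMap c r θ) c = r :=
  Metric.mem_sphere.1 (circleMap_mem_sphere c hr θ)

theorem setLIntegral_annulus_eq {f : ℂ → ℝ≥0∞} (hf : Measurable f) (c : ℂ) {a : ℝ} (ha : 0 ≤ a)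
    (b : ℝ) :
    ∫⁻ z in {z | a < dist z c ∧ dist z c < b}, f z =
      ∫⁻ r in Ioo a b, ENNReal.ofReal r * ∫⁻ θ in Ioo 0 (2 * π), f (circleMap c r θ) := by
  set A := {z | a < dist z c ∧ dist z c < b}
  have hdist : Measurable fun z => dist z c := measurable_id.dist measurable_const
  have hA : MeasurableSet A :=
    (measurableSet_lt measurable_const hdist).inter (measurableSet_lt hdist measurable_const)
  have hIoo : Ioo a b ∩ Ioi 0 = Ioo a b := inter_eq_left.2 fun r hr => ha.trans_lt hr.1
  rw [← lintegral_indicator hA, lintegral_eq_lintegral_Ioi_circleMap (hf.indicator hA) c,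
    ← hIoo, ← setLIntegral_indicator measurableSet_Ioo]
  refine setLIntegral_congr_fun measurableSet_Ioi fun r (hr : 0 < r) => ?_
  have hmem : ∀ θ, circleMap c r θ ∈ A ↔ r ∈ Ioo a b := fun θ => by
    simp [A, dist_circleMap_center c hr.le θ]
  by_cases hab : r ∈ Ioo a b
  · simp only [indicator_of_mem hab, indicator_of_mem ((hmem _).2 hab)]
  · simp only [indicator_of_notMem hab, indicator_of_notMem (mt (hmem _).1 hab),
      lintegral_zero, mul_zero]

theorem setLIntegral_annulus_mul_radial_eq {T : ℂ → ℝ≥0∞} (hT : Measurable T) {g : ℝ → ℝ≥0∞}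
    (hg : Measurable g) (c : ℂ) {a : ℝ} (ha : 0 ≤ a) (b : ℝ) :
    ∫⁻ z in {z | a < dist z c ∧ dist z c < b}, T z * g (dist z c) =
      ∫⁻ r in Ioo a b, g r * (ENNReal.ofReal r * ∫⁻ θ in Ioo 0 (2 * π), T (circleMap c r θ)) := by
  rw [setLIntegral_annulus_eq (f := fun z => T z * g (dist z c)) (by fun_prop) c ha]
  refine setLIntegral_congr_fun measurableSet_Ioo fun r hr => ?_
  have hTr : Measurable fun θ => T (circleMap c r θ) := hT.comp (measurable_circleMap c r)
  simp only [dist_circleMap_center c (ha.trans hr.1.le), lintegral_mul_const _ hTr]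
  ring

theorem ENNReal.sq_lintegral_le_lintegral_sq_mul_mul_lintegral_inv {α : Type*}
    [MeasurableSpace α] {ν : Measure α} {η K : α → ℝ≥0∞} (hη : AEMeasurable η ν)
    (hK : AEMeasurable K ν) (hK0 : ∀ᵐ x ∂ν, K x ≠ 0) (hKtop : ∀ᵐ x ∂ν, K x ≠ ∞) :
    (∫⁻ x, η x ∂ν) ^ 2 ≤ (∫⁻ x, η x ^ 2 * K x ∂ν) * ∫⁻ x, (K x)⁻¹ ∂ν := by
  have hsplit : ∀ᵐ x ∂ν, η x * K x ^ (1 / 2 : ℝ) * (K x)⁻¹ ^ (1 / 2 : ℝ) = η x := by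
    filter_upwards [hK0, hKtop] with x h0 htop
    rw [inv_rpow, mul_assoc, ENNReal.mul_inv_cancel (rpow_pos h0.bot_lt htop).ne'
      (rpow_ne_top_of_nonneg (by norm_num) htop), mul_one]
  have hsq₁ : ∀ x, (η x * K x ^ (1 / 2 : ℝ)) ^ (2 : ℝ) = η x ^ 2 * K x := fun x => by
    rw [mul_rpow_of_nonneg _ _ zero_le_two, ← rpow_mul, rpow_two]
    norm_num
  have hsq₂ : ∀ x, ((K x)⁻¹ ^ (1 / 2 : ℝ)) ^ (2 : ℝ) = (K x)⁻¹ := fun x => by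
    rw [← rpow_mul]
    norm_num
  have holder : ∫⁻ x, η x * K x ^ (1 / 2 : ℝ) * (K x)⁻¹ ^ (1 / 2 : ℝ) ∂ν ≤
      (∫⁻ x, (η x * K x ^ (1 / 2 : ℝ)) ^ (2 : ℝ) ∂ν) ^ (1 / 2 : ℝ) *
        (∫⁻ x, ((K x)⁻¹ ^ (1 / 2 : ℝ)) ^ (2 : ℝ) ∂ν) ^ (1 / 2 : ℝ) :=
    lintegral_mul_le_Lp_mul_Lq ν .two_two (hη.mul (hK.pow_const _)) (hK.inv.pow_const _)
  rw [lintegral_congr_ae hsplit] at holder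
  simp only [hsq₁, hsq₂] at holder
  calc (∫⁻ x, η x ∂ν) ^ 2
      ≤ ((∫⁻ x, η x ^ 2 * K x ∂ν) ^ (1 / 2 : ℝ) * (∫⁻ x, (K x)⁻¹ ∂ν) ^ (1 / 2 : ℝ)) ^ 2 := by
        gcongr
    _ = _ := by
      rw [← mul_rpow_of_nonneg _ _ (by norm_num), ← rpow_natCast, ← rpow_mul]
      norm_num

theorem ENNReal.inv_lintegral_inv_le_lintegral_sq_mul {α : Type*}
    [MeasurableSpace α] {ν : Measure α} {η K : α → ℝ≥0∞} (hη : AEMeasurable η ν)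
    (hK : AEMeasurable K ν) (hKtop : ∀ᵐ x ∂ν, K x ≠ ∞) (hη1 : ∫⁻ x, η x ∂ν = 1) :
    (∫⁻ x, (K x)⁻¹ ∂ν)⁻¹ ≤ ∫⁻ x, η x ^ 2 * K x ∂ν := by
  rcases eq_or_ne (∫⁻ x, (K x)⁻¹ ∂ν) ∞ with hI | hI
  · simp [hI]
  have hK0 : ∀ᵐ x ∂ν, K x ≠ 0 := by
    filter_upwards [ae_lt_top' hK.inv hI] with x hx
    exact inv_lt_top.1 hx |>.ne'
  have hCS := sq_lintegral_le_lintegral_sq_mul_mul_lintegral_inv hη hK hK0 hKtop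
  rw [hη1, one_pow] at hCS
  have hI0 : ∫⁻ x, (K x)⁻¹ ∂ν ≠ 0 := fun h => by simp [h] at hCS
  exact (inv_le_iff_le_mul (fun _ => hI0) fun h => absurd h hI).2 (by rwa [mul_comm])

theorem ring_integral_lower_bound_general (D : Set ℂ) (hD : IsOpen D)
    (μf : ℂ → ℂ) (hμm : Measurable μf)
    (z₀ : ℂ)
    (ε ε₀ : ℝ) (hε : 0 < ε)
    (hfin : ∀ᵐ r ∂(volume.restrict (Set.Ioo ε ε₀)), circleNormKT D μf z₀ r ≠ ⊤)
    (I : ℝ≥0∞) (hI : I = ∫⁻ r in Set.Ioo ε ε₀, (circleNormKT D μf z₀ r)⁻¹)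
    (η : ℝ → ℝ≥0∞) (hηm : Measurable η)
    (hη1 : (∫⁻ r in Set.Ioo ε ε₀, η r) = 1) :
    I⁻¹ ≤ ∫⁻ z in ({z : ℂ | ε < dist z z₀ ∧ dist z z₀ < ε₀} ∩ D),
      tangentDilatation D μf z₀ z * (η (dist z z₀)) ^ 2 := by
  have hT := measurable_tangentDilatation hD.measurableSet hμm z₀
  have hK : Measurable (circleNormKT D μf z₀) :=
    measurable_ofReal.mul (measurable_lintegral_circleMap hT z₀ _)
  calc I⁻¹ ≤ ∫⁻ r in Ioo ε ε₀, η r ^ 2 * circleNormKT D μf z₀ r :=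
        hI ▸ inv_lintegral_inv_le_lintegral_sq_mul hηm.aemeasurable hK.aemeasurable hfin hη1
    _ = ∫⁻ z in {z | ε < dist z z₀ ∧ dist z z₀ < ε₀},
          tangentDilatation D μf z₀ z * η (dist z z₀) ^ 2 :=
        (setLIntegral_annulus_mul_radial_eq hT (hηm.pow_const 2) z₀ hε.le ε₀).symm
    _ = _ := by
      rw [inter_comm, ← Measure.restrict_restrict hD.measurableSet]
      exact (setLIntegral_eq_of_support_subset <| (Function.support_mul_subset_left _ _).trans
        (support_tangentDilatation_subset D μf z₀)).symm

/-- Lower bound for ring integrals of the tangent dilatation: for every measurable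
`η : (ε, ε₀) → [0,∞]` with `∫_ε^{ε₀} η(r) dr = 1`,
`∫_{A∩D} K^T_μ(z,z₀)·η(|z−z₀|)² dm(z) ≥ I⁻¹`, where
`I = ∫_ε^{ε₀} dr/‖K^T_μ‖₁(z₀,r)` and `A = {ε < |z−z₀| < ε₀}`. -/
theorem ring_integral_lower_bound (D : Set ℂ) (hD : IsOpen D) (hDconn : IsConnected D)
    (μf : ℂ → ℂ) (hμm : Measurable μf)
    (hμ : ∀ᵐ z ∂(volume : Measure ℂ), z ∈ D → ‖μf z‖ < 1)
    (z₀ : ℂ) (hz₀ : z₀ ∈ closure D)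
    (ε ε₀ : ℝ) (hε : 0 < ε) (hεε₀ : ε < ε₀)
    (hε₀ : ENNReal.ofReal ε₀ < ⨆ z ∈ D, edist z z₀)
    (hfin : ∀ᵐ r ∂(volume.restrict (Set.Ioo ε ε₀)), circleNormKT D μf z₀ r ≠ ⊤)
    (I : ℝ≥0∞) (hI : I = ∫⁻ r in Set.Ioo ε ε₀, (circleNormKT D μf z₀ r)⁻¹)
    (η : ℝ → ℝ≥0∞) (hηm : Measurable η)
    (hη1 : (∫⁻ r in Set.Ioo ε ε₀, η r) = 1) :
    I⁻¹ ≤ ∫⁻ z in ({z : ℂ | ε < dist z z₀ ∧ dist z z₀ < ε₀} ∩ D),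
      tangentDilatation D μf z₀ z * (η (dist z z₀)) ^ 2 :=
  ring_integral_lower_bound_general D hD μf hμm z₀ ε ε₀ hε hfin I hI η hηm hη1
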